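/- arXiv:1904.10249 — 3 statements merged into one kernel-verified Lean document; each statement's English description precedes it below -/
import Mathlib

section
/- The number of PGL_3(F_q)-orbits of ordered quintuples of points in P^2(F_q) in general position (no three collinear) equals q^2 - 5q + 6. -/
open Projectivization
open scoped LinearAlgebra.Projectivization

/-- The projective plane over `F`. -/
abbrev PP (F : Type) [Field F] := ℙ F (Fin 3 → F)

/-- Three points of the projective plane are collinear if their representative lines all
lie in a common subspace of dimension at most 2. -/
def Collin (F : Type) [Field F] (a b c : PP F) : Prop :=
  ∃ W : Submodule F (Fin 3 → F), Module.finrank F W ≤ 2 ∧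
    a.submodule ≤ W ∧ b.submodule ≤ W ∧ c.submodule ≤ W

/-- A tuple of points of the projective plane is in general position if no three of
them are collinear. -/
def GenPos (F : Type) [Field F] {n : ℕ} (P : Fin n → PP F) : Prop :=
  ∀ i j k : Fin n, i ≠ j → i ≠ k → j ≠ k → ¬ Collin F (P i) (P j) (P k)

/-- The action of `GL_3(F)` on the projective plane (inducing the `PGL_3(F)`-action). -/
noncomputable def glAct (F : Type) [Field F] (g : GL (Fin 3) F) (x : PP F) : PP F :=
  Projectivization.map
    ((Matrix.GeneralLinearGroup.toLin g).toLinearEquiv : (Fin 3 → F) →ₗ[F] (Fin 3 → F))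
    (Matrix.GeneralLinearGroup.toLin g).toLinearEquiv.injective x

/-- The standard frame `[1:0:0], [0:1:0], [0:0:1], [1:1:1]`. -/
noncomputable def frame (F : Type) [Field F] : Fin 4 → PP F :=
  ![Projectivization.mk F ![1,0,0] (by intro h; have := congrFun h 0; simp at this),
    Projectivization.mk F ![0,1,0] (by intro h; have := congrFun h 1; simp at this),
    Projectivization.mk F ![0,0,1] (by intro h; have := congrFun h 2; simp at this),
    Projectivization.mk F ![1,1,1] (by intro h; have := congrFun h 0; simp at this)]


/-- Two general-position quintuples are projectively equivalent if some element of
`GL_3(F)` (equivalently of `PGL_3(F)`) takes one to the other. -/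
def ProjEquiv (F : Type) [Field F] (P Q : {P : Fin 5 → PP F // GenPos F P}) : Prop :=
  ∃ g : GL (Fin 3) F, ∀ i, glAct F g (P.1 i) = Q.1 i

/-!
Four points `[r₀], …, [r₃]` of `P²` in general position are the image of the standard frame under
some `g ∈ GL₃`: write `r₃ = ∑ cₖ rₖ`; general position forces every `cₖ ≠ 0`, and `g` is the
matrix with columns `cₖ rₖ`. An element fixing the standard frame is scalar, so it acts trivially.
Hence each orbit of quintuples contains exactly one quintuple extending the standard frame, and its
fifth point is `[a : b : 1]` with `a, b ∉ {0, 1}` and `a ≠ b`, which leaves `(q - 2)(q - 3)`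
choices.
-/

open Matrix

theorem Matrix.eq_smul_one_of_mulVec_single {n R : Type*} [Fintype n] [DecidableEq n]
    [CommSemiring R] {M : Matrix n n R} {a : n → R}
    (ha : ∀ k, M *ᵥ Pi.single k 1 = a k • Pi.single k 1) {d : R} (hd : M *ᵥ 1 = d • 1) :
    M = d • 1 := by
  have hM : M = diagonal a := by
    ext i k
    rcases eq_or_ne i k with rfl | h
    · simpa [mulVec_single_one] using congrFun (ha i) i
    · simpa [mulVec_single_one, h] using congrFun (ha k) i
  have ha' : a = fun _ => d := funext fun i => by simpa [hM, mulVec_diagonal] using congrFun hd i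
  rw [hM, ha', smul_one_eq_diagonal]

variable {F : Type} [Field F]

namespace Collin

theorem mk_iff_not_linearIndependent {u v w : Fin 3 → F} (hu : u ≠ 0) (hv : v ≠ 0)
    (hw : w ≠ 0) :
    Collin F (mk F u hu) (mk F v hv) (mk F w hw) ↔ ¬ LinearIndependent F ![u, v, w] := by
  have hspan : ∀ W : Submodule F (Fin 3 → F),
      ((mk F u hu).submodule ≤ W ∧ (mk F v hv).submodule ≤ W ∧
        (mk F w hw).submodule ≤ W) ↔ Submodule.span F (Set.range ![u, v, w]) ≤ W := by
    intro W
    simp only [submodule_mk, Submodule.span_le, Set.range_subset_iff, Fin.forall_fin_succ]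
    simp
  have hle : Module.finrank F (Submodule.span F (Set.range ![u, v, w])) ≤ 3 :=
    (finrank_range_le_card (R := F) ![u, v, w]).trans_eq (Fintype.card_fin 3)
  rw [linearIndependent_iff_card_eq_finrank_span, Fintype.card_fin]
  constructor
  · rintro ⟨W, hW, hW'⟩
    have := Submodule.finrank_mono ((hspan W).1 hW')
    simp only [Set.finrank] at *
    omega
  · intro h
    refine ⟨_, ?_, (hspan _).2 le_rfl⟩
    simp only [Set.finrank] at *
    omega

theorem mk_iff_det {u v w : Fin 3 → F} (hu : u ≠ 0) (hv : v ≠ 0) (hw : w ≠ 0) :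
    Collin F (mk F u hu) (mk F v hv) (mk F w hw) ↔ (of ![u, v, w]).det = 0 := by
  rw [mk_iff_not_linearIndependent, not_iff_comm, ← ne_eq, ← isUnit_iff_ne_zero,
    ← isUnit_iff_isUnit_det]
  exact linearIndependent_rows_iff_isUnit.symm

theorem of_eq_add {u v w : Fin 3 → F} (hu : u ≠ 0) (hv : v ≠ 0) (hw : w ≠ 0) {a b : F}
    (h : w = a • u + b • v) : Collin F (mk F u hu) (mk F v hv) (mk F w hw) := by
  refine ⟨Submodule.span F (Set.range ![u, v]),
    (finrank_range_le_card (R := F) ![u, v]).trans_eq (Fintype.card_fin 2), ?_⟩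
  have hu' : u ∈ Submodule.span F (Set.range ![u, v]) := Submodule.subset_span ⟨0, rfl⟩
  have hv' : v ∈ Submodule.span F (Set.range ![u, v]) := Submodule.subset_span ⟨1, rfl⟩
  simp only [submodule_mk, Submodule.span_singleton_le_iff_mem, h]
  exact ⟨hu', hv', add_mem (Submodule.smul_mem _ a hu') (Submodule.smul_mem _ b hv')⟩

theorem swap_left {a b c : PP F} (h : Collin F a b c) : Collin F b a c := by
  obtain ⟨W, hW, ha, hb, hc⟩ := h
  exact ⟨W, hW, hb, ha, hc⟩

theorem swap_right {a b c : PP F} (h : Collin F a b c) : Collin F a c b := by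
  obtain ⟨W, hW, ha, hb, hc⟩ := h
  exact ⟨W, hW, ha, hc, hb⟩

theorem smul_iff (g : GL (Fin 3) F) (a b c : PP F) :
    Collin F (g • a) (g • b) (g • c) ↔ Collin F a b c := by
  induction a using Projectivization.ind
  induction b using Projectivization.ind
  induction c using Projectivization.ind
  simp only [smul_mk, mk_iff_not_linearIndependent, not_iff_not]
  set f := mulVecLin (g : Matrix (Fin 3) (Fin 3) F)
  have hker : LinearMap.ker f = ⊥ := LinearMap.ker_eq_bot.2 (mulVec_injective_iff_isUnit.2 g.isUnit)
  refine Iff.trans (iff_of_eq ?_) (f.linearIndependent_iff hker)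
  congr 1
  ext i : 1
  fin_cases i <;> rfl

end Collin

theorem glAct_eq_smul (g : GL (Fin 3) F) (x : PP F) : glAct F g x = g • x := rfl

theorem genPos_iff_lt {n : ℕ} {P : Fin n → PP F} :
    GenPos F P ↔ ∀ i j k, i < j → j < k → ¬ Collin F (P i) (P j) (P k) := by
  refine ⟨fun h i j k hij hjk => h i j k hij.ne (hij.trans hjk).ne hjk.ne,
    fun h i j k hij hik hjk hc => ?_⟩
  rcases hij.lt_or_gt with hij | hji <;> rcases hik.lt_or_gt with hik | hki <;>
    rcases hjk.lt_or_gt with hjk | hkj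
  · exact h i j k hij hjk hc
  · exact h i k j hik hkj hc.swap_right
  · order
  · exact h k i j hki hij hc.swap_right.swap_left
  · exact h j i k hji hik hc.swap_left
  · order
  · exact h j k i hjk hki hc.swap_left.swap_right
  · exact h k j i hkj hji hc.swap_left.swap_right.swap_left

theorem genPos_smul_iff (g : GL (Fin 3) F) {n : ℕ} {P : Fin n → PP F} :
    GenPos F (fun i => g • P i) ↔ GenPos F P := by
  simp only [GenPos, Collin.smul_iff]

theorem GenPos.comp_injective {m n : ℕ} {P : Fin n → PP F} (hP : GenPos F P)
    {f : Fin m → Fin n} (hf : Function.Injective f) : GenPos F (P ∘ f) :=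
  fun i j k hij hik hjk => hP (f i) (f j) (f k) (hf.ne hij) (hf.ne hik) (hf.ne hjk)

theorem frame_castSucc (k : Fin 3) : frame F k.castSucc = mk F (Pi.single k 1) (by simp) := by
  fin_cases k <;> exact (mk_eq_mk_iff' _ _ _ _ _).2 ⟨1, by ext i; fin_cases i <;> simp⟩

theorem frame_three : frame F 3 = mk F 1 one_ne_zero :=
  (mk_eq_mk_iff' _ _ _ _ _).2 ⟨1, by ext i; fin_cases i <;> simp⟩

theorem GenPos.exists_sum_smul_rep_eq {P : Fin 4 → PP F} (hP : GenPos F P) :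
    ∃ c : Fin 3 → F, (∀ k, c k ≠ 0) ∧ ∑ k, c k • (P k.castSucc).rep = (P 3).rep := by
  set r : Fin 4 → Fin 3 → F := fun i => (P i).rep
  have hP' : ∀ i j k, i ≠ j → i ≠ k → j ≠ k →
      ¬ Collin F (mk F (r i) (P i).rep_nonzero) (mk F (r j) (P j).rep_nonzero)
        (mk F (r k) (P k).rep_nonzero) :=
    fun i j k hij hik hjk => by simpa only [r, mk_rep] using hP i j k hij hik hjk
  have hli : LinearIndependent F ![r 0, r 1, r 2] := by
    simpa [Collin.mk_iff_not_linearIndependent] using hP' 0 1 2 (by decide) (by decide) (by decide)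
  obtain ⟨c, hc⟩ : ∃ c : Fin 3 → F, ∑ k, c k • ![r 0, r 1, r 2] k = r 3 :=
    (Submodule.mem_span_range_iff_exists_fun F).1
      (hli.span_eq_top_of_card_eq_finrank' (by simp) ▸ Submodule.mem_top)
  rw [Fin.sum_univ_three] at hc
  -- a vanishing coefficient would put `r 3` on the line through the other two points
  have hc0 : c 0 ≠ 0 := fun h0 => hP' 1 2 3 (by decide) (by decide) (by decide)
    (Collin.of_eq_add _ _ _ (by rw [← hc, h0, zero_smul, zero_add]; rfl))
  have hc1 : c 1 ≠ 0 := fun h1 => hP' 0 2 3 (by decide) (by decide) (by decide)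
    (Collin.of_eq_add _ _ _ (by rw [← hc, h1, zero_smul, add_zero]; rfl))
  have hc2 : c 2 ≠ 0 := fun h2 => hP' 0 1 3 (by decide) (by decide) (by decide)
    (Collin.of_eq_add _ _ _ (by rw [← hc, h2, zero_smul, add_zero]; rfl))
  refine ⟨c, fun k => ?_, by rw [Fin.sum_univ_three]; exact hc⟩
  fin_cases k <;> assumption

theorem GenPos.exists_smul_frame_eq {P : Fin 4 → PP F} (hP : GenPos F P) :
    ∃ g : GL (Fin 3) F, ∀ i, g • frame F i = P i := by
  obtain ⟨c, hc0, hc⟩ := hP.exists_sum_smul_rep_eq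
  set s : Fin 3 → Fin 3 → F := fun k => (P k.castSucc).rep
  have hs : (of s).det ≠ 0 := by
    have := hP 0 1 2 (by decide) (by decide) (by decide)
    rw [← mk_rep (P 0), ← mk_rep (P 1), ← mk_rep (P 2), Collin.mk_iff_det] at this
    convert this using 3
    ext k : 1
    fin_cases k <;> rfl
  set M : Matrix (Fin 3) (Fin 3) F := (of fun k => c k • s k)ᵀ
  have hM : IsUnit M := by
    rw [isUnit_transpose, isUnit_iff_isUnit_det, isUnit_iff_ne_zero]
    change (of fun i j => c i * of s i j).det ≠ 0
    rw [det_mul_column]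
    exact mul_ne_zero (Finset.prod_ne_zero_iff.2 fun k _ => hc0 k) hs
  have hMv : ∀ w, hM.unit • w = ∑ k, w k • c k • s k := fun w => by
    rw [Units.smul_def, hM.unit_spec, smul_eq_mulVec, mulVec_transpose, vecMul_eq_sum]; rfl
  refine ⟨hM.unit, fun i => ?_⟩
  rw [← mk_rep (P i)]
  fin_cases i
  · exact (mk_eq_mk_iff' _ _ _ _ _).2 ⟨c 0, by simp [hMv, Fin.sum_univ_three, s]⟩
  · exact (mk_eq_mk_iff' _ _ _ _ _).2 ⟨c 1, by simp [hMv, Fin.sum_univ_three, s]⟩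
  · exact (mk_eq_mk_iff' _ _ _ _ _).2 ⟨c 2, by simp [hMv, Fin.sum_univ_three, s]⟩
  · exact (mk_eq_mk_iff' _ _ _ _ _).2 ⟨1, by simp [hMv, ← hc, Fin.sum_univ_three, s]⟩

theorem smul_eq_self_of_forall_smul_frame {g : GL (Fin 3) F}
    (hg : ∀ i, g • frame F i = frame F i) (x : PP F) : g • x = x := by
  have hfix : ∀ v (hv : v ≠ 0), g • mk F v hv = mk F v hv →
      ∃ a : F, (g : Matrix (Fin 3) (Fin 3) F) *ᵥ v = a • v := by
    intro v hv h
    obtain ⟨a, ha⟩ := (mk_eq_mk_iff' _ _ _ _ _).1 h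
    exact ⟨a, ha.symm⟩
  choose a ha using fun k : Fin 3 => hfix _ _ (frame_castSucc (F := F) k ▸ hg k.castSucc)
  obtain ⟨d, hd⟩ := hfix _ _ (frame_three (F := F) ▸ hg 3)
  have hg' := eq_smul_one_of_mulVec_single ha hd
  induction x using Projectivization.ind with | _ v hv =>
  exact (mk_eq_mk_iff' _ _ _ _ _).2 ⟨d, by simp [Units.smul_def, hg']⟩

noncomputable def extendFrame (x : PP F) : Fin 5 → PP F :=
  ![frame F 0, frame F 1, frame F 2, frame F 3, x]

theorem extendFrame_castSucc (x : PP F) (i : Fin 4) : extendFrame x i.castSucc = frame F i := by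
  fin_cases i <;> rfl

theorem genPos_extendFrame_mk_iff {v : Fin 3 → F} (hv : v ≠ 0) :
    GenPos F (extendFrame (mk F v hv)) ↔
      v 0 ≠ 0 ∧ v 1 ≠ 0 ∧ v 2 ≠ 0 ∧ v 0 ≠ v 1 ∧ v 0 ≠ v 2 ∧ v 1 ≠ v 2 := by
  simp only [genPos_iff_lt, Fin.forall_fin_succ, extendFrame, frame]
  simp [Collin.mk_iff_det, det_fin_three, sub_eq_zero, neg_add_eq_zero]
  grind

theorem projEquiv_equivalence : Equivalence (ProjEquiv F) where
  refl P := ⟨1, fun i => one_smul (GL (Fin 3) F) (P.1 i)⟩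
  symm := fun ⟨g, hg⟩ => ⟨g⁻¹, fun i => by
    simp only [glAct_eq_smul] at hg ⊢
    rw [← hg i, inv_smul_smul]⟩
  trans := fun ⟨g, hg⟩ ⟨h, hh⟩ => ⟨h * g, fun i => by
    simp only [glAct_eq_smul] at hg hh ⊢
    rw [mul_smul, hg i, hh i]⟩

theorem bijective_mk_extendFrame :
    Function.Bijective fun x : {x : PP F // GenPos F (extendFrame x)} =>
      Quot.mk (ProjEquiv F) ⟨extendFrame x.1, x.2⟩ := by
  refine ⟨fun x y hxy => ?_, fun Q => ?_⟩
  · obtain ⟨g, hg⟩ := projEquiv_equivalence.eqvGen_iff.1 (Quot.eq.1 hxy)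
    simp only [glAct_eq_smul] at hg
    have hfix : ∀ i, g • frame F i = frame F i := fun i => by
      simpa only [extendFrame_castSucc] using hg i.castSucc
    exact Subtype.ext ((smul_eq_self_of_forall_smul_frame hfix x.1).symm.trans (hg 4))
  · induction Q using Quot.ind with | _ P =>
    obtain ⟨g, hg⟩ := (P.2.comp_injective (Fin.castSucc_injective 4)).exists_smul_frame_eq
    have hP : ∀ i, g • extendFrame (g⁻¹ • P.1 (Fin.last 4)) i = P.1 i :=
      Fin.lastCases (smul_inv_smul g _) fun i => by rw [extendFrame_castSucc]; exact hg i
    refine ⟨⟨_, (genPos_smul_iff g).1 ?_⟩, Quot.sound ⟨g, hP⟩⟩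
    simpa only [hP] using P.2

noncomputable def affinePoint (a b : F) : PP F :=
  mk F ![a, b, 1] fun h => one_ne_zero (congrFun h 2)

section Counting

variable [Fintype F] [DecidableEq F]

theorem genPos_extendFrame_affinePoint_iff (a b : F) :
    GenPos F (extendFrame (affinePoint a b)) ↔
      (a, b) ∈ (Finset.univ \ {0, 1} : Finset F).offDiag := by
  rw [affinePoint, genPos_extendFrame_mk_iff]
  simp only [Fin.isValue, cons_val_zero, ne_eq, cons_val_one, cons_val, one_ne_zero,
    not_false_eq_true, true_and, Finset.mem_offDiag, Finset.mem_sdiff, Finset.mem_univ,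
    Finset.mem_insert, Finset.mem_singleton, not_or]
  tauto

theorem bijective_affinePoint :
    Function.Bijective fun p : (Finset.univ \ {0, 1} : Finset F).offDiag =>
      (⟨affinePoint p.1.1 p.1.2, (genPos_extendFrame_affinePoint_iff _ _).2 p.2⟩ :
        {x : PP F // GenPos F (extendFrame x)}) := by
  refine ⟨fun ⟨⟨a, b⟩, _⟩ ⟨⟨a', b'⟩, _⟩ h => ?_, fun ⟨x, hx⟩ => ?_⟩
  · obtain ⟨t, ht⟩ := (mk_eq_mk_iff' _ _ _ _ _).1 (congrArg Subtype.val h)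
    obtain rfl : t = 1 := by simpa using congrFun ht 2
    rw [one_smul] at ht
    exact Subtype.ext (Prod.ext (congrFun ht 0).symm (congrFun ht 1).symm)
  · induction x using Projectivization.ind with | _ v hv =>
    have hv2 : v 2 ≠ 0 := ((genPos_extendFrame_mk_iff hv).1 hx).2.2.1
    have hx' : affinePoint (v 0 / v 2) (v 1 / v 2) = mk F v hv :=
      (mk_eq_mk_iff' _ _ _ _ _).2
        ⟨(v 2)⁻¹, by ext i; fin_cases i <;> simp [hv2, div_eq_inv_mul]⟩
    exact ⟨⟨_, (genPos_extendFrame_affinePoint_iff _ _).1 (hx' ▸ hx)⟩, Subtype.ext hx'⟩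

end Counting

theorem statement2_general (F : Type) [Field F] [Fintype F] :
    (Nat.card (Quot (ProjEquiv F)) : ℤ) =
      (Fintype.card F : ℤ)^2 - 5 * Fintype.card F + 6 := by
  classical
  have hcard : Nat.card (Quot (ProjEquiv F)) = (Finset.univ \ {0, 1} : Finset F).offDiag.card := by
    rw [← Nat.card_eq_of_bijective _ bijective_mk_extendFrame,
      ← Nat.card_eq_of_bijective _ bijective_affinePoint, Nat.card_eq_finsetCard]
  have hq : 2 ≤ Fintype.card F := Fintype.one_lt_card
  rw [hcard, Finset.offDiag_card, Finset.card_univ_sdiff, Finset.card_pair zero_ne_one,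
    Nat.cast_sub (Nat.le_mul_self _), Nat.cast_mul, Nat.cast_sub hq]
  ring

/-- The number of `PGL_3(F_q)`-orbits of ordered quintuples of points of `P^2(F_q)` in
general position equals `q^2 - 5q + 6`. -/
theorem statement2 (F : Type) [Field F] [Fintype F] (hq : 3 < Fintype.card F) :
    (Nat.card (Quot (ProjEquiv F)) : ℤ) =
      (Fintype.card F : ℤ)^2 - 5 * Fintype.card F + 6 :=
  statement2_general F
end

section
/- Let F be the q-power Frobenius acting on P^2 over an algebraic closure of F_q, and let P_1,...,P_5 be five points permuted cyclically by F (i.e. P_{i+1} = F(P_i) indices mod 5, with P_1 not fixed by F). If three of the five points lie on a common line L, then L is defined over F_q and contains all five points. -/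
open Projectivization
open scoped LinearAlgebra.Projectivization

/-- An algebraic closure of the prime field `F_p`. -/
abbrev Kbar (p : ℕ) [Fact p.Prime] := AlgebraicClosure (ZMod p)

/-- The `q = p^n`-power Frobenius ring endomorphism of `\bar F_q`. -/
noncomputable def frobHom (p : ℕ) [Fact p.Prime] (n : ℕ) : Kbar p →+* Kbar p :=
  (frobenius (Kbar p) p) ^ n

/-- The `q`-power Frobenius as a semilinear map on the vector space `\bar F_q^3`. -/
noncomputable def frobSL (p : ℕ) [Fact p.Prime] (n : ℕ) :
    (Fin 3 → Kbar p) →ₛₗ[frobHom p n] (Fin 3 → Kbar p) where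
  toFun v := fun i => frobHom p n (v i)
  map_add' v w := by funext i; simp
  map_smul' c v := by funext i; simp [Pi.smul_apply, smul_eq_mul]


instance (p : ℕ) [Fact p.Prime] (n : ℕ) : RingHomSurjective (frobHom p n) := by
  constructor
  induction n with
  | zero => exact fun x => ⟨x, rfl⟩
  | succ m ih =>
    have h : frobHom p (m + 1) = (frobHom p m).comp (frobenius (Kbar p) p) := by
      rw [frobHom, pow_succ]
      rfl
    rw [h]
    exact ih.comp (frobeniusEquiv (Kbar p) p).surjective

/-- The `q`-power Frobenius morphism on the projective plane over `\bar F_q`. -/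
noncomputable def Frob (p : ℕ) [Fact p.Prime] (n : ℕ) :
    ℙ (Kbar p) (Fin 3 → Kbar p) → ℙ (Kbar p) (Fin 3 → Kbar p) :=
  Projectivization.map (frobSL p n)
    (fun a b hab => by
      funext i
      exact (frobHom p n).injective (congrFun hab i))

/-!
The points `P c` form a Frobenius orbit of prime length `5`, so they are pairwise distinct.
Among three residues mod `5` there are two distinct pairs `a, b` and `a + d, b + d` with the same
shift `d ≠ 0`. A line is spanned by any two distinct points on it, so `F^d L = L`; also
`F^5 L = L`, and `gcd(d, 5) = 1` gives `F L = L`. Then `L` contains the whole orbit.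
-/

section CyclicOrbit

variable {α : Type*} {f : α → α} {m : ℕ} {P : Fin (m + 1) → α}

theorem apply_add_eq_iterate (hP : ∀ i, P (i + 1) = f (P i)) (c d : Fin (m + 1)) :
    P (c + d) = f^[d] (P c) := by
  induction d using Fin.induction with
  | zero => simp
  | succ i ih =>
    rw [← Fin.coeSucc_eq_succ, ← add_assoc, hP, ih, Fin.coeSucc_eq_succ, Fin.val_succ,
      Fin.val_castSucc, Function.iterate_succ_apply']

theorem isPeriodicPt_of_apply_add_one (hP : ∀ i, P (i + 1) = f (P i)) (c : Fin (m + 1)) :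
    Function.IsPeriodicPt f (m + 1) (P c) := by
  rw [Function.IsPeriodicPt, Function.IsFixedPt, Function.iterate_succ_apply', ← Fin.val_last m,
    ← apply_add_eq_iterate hP, ← hP, add_assoc, Fin.last_add_one, add_zero]

theorem injective_of_apply_add_one (hP : ∀ i, P (i + 1) = f (P i)) (hm : (m + 1).Prime)
    (h0 : f (P 0) ≠ P 0) : Function.Injective P := by
  have hper : Function.minimalPeriod f (P 0) = m + 1 :=
    ((Nat.dvd_prime hm).1 (isPeriodicPt_of_apply_add_one hP 0).minimalPeriod_dvd).resolve_left
      (by rwa [Function.minimalPeriod_eq_one_iff_isFixedPt])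
  have hiter (c : Fin (m + 1)) : P c = f^[c] (P 0) := by
    simpa using apply_add_eq_iterate hP 0 c
  intro a b hab
  rw [hiter a, hiter b] at hab
  exact Fin.ext <| Function.iterate_injOn_Iio_minimalPeriod
    (by rw [Set.mem_Iio, hper]; exact a.isLt) (by rw [Set.mem_Iio, hper]; exact b.isLt) hab

theorem isFixedPt_sup_of_sup_add_eq [Max α] (hg : Function.Semiconj₂ f (· ⊔ ·) (· ⊔ ·))
    (hP : ∀ i, P (i + 1) = f (P i)) (hm : (m + 1).Prime) {a b d : Fin (m + 1)} (hd : d ≠ 0)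
    (h : P (a + d) ⊔ P (b + d) = P a ⊔ P b) : Function.IsFixedPt f (P a ⊔ P b) := by
  have hper_d : Function.IsPeriodicPt f d (P a ⊔ P b) := by
    rw [Function.IsPeriodicPt, Function.IsFixedPt, hg.iterate, ← apply_add_eq_iterate hP,
      ← apply_add_eq_iterate hP]
    exact h
  have hper : Function.IsPeriodicPt f (m + 1) (P a ⊔ P b) := by
    rw [Function.IsPeriodicPt, Function.IsFixedPt, hg.iterate,
      isPeriodicPt_of_apply_add_one hP a, isPeriodicPt_of_apply_add_one hP b]
  have hcop : Nat.gcd d (m + 1) = 1 :=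
    (Nat.coprime_of_lt_prime (Fin.val_ne_zero_iff.2 hd) d.isLt hm).symm
  simpa [hcop, Function.IsPeriodicPt] using hper_d.gcd hper

theorem le_of_isFixedPt [Preorder α] (hf : Monotone f) (hP : ∀ i, P (i + 1) = f (P i)) {x : α}
    (hx : Function.IsFixedPt f x) {a : Fin (m + 1)} (ha : P a ≤ x) (c : Fin (m + 1)) :
    P c ≤ x := calc
  P c = f^[(c - a : Fin (m + 1))] (P a) := by rw [← apply_add_eq_iterate hP, add_sub_cancel]
  _ ≤ f^[(c - a : Fin (m + 1))] x := hf.iterate _ ha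
  _ = x := (hx.iterate _).eq

end CyclicOrbit

theorem Projectivization.submodule_sup_eq_of_ne {K V : Type*} [DivisionRing K] [AddCommGroup V]
    [Module K V] {x y : ℙ K V} (hxy : x ≠ y) {L : Submodule K V} (hL : Module.finrank K L = 2)
    (hx : x.submodule ≤ L) (hy : y.submodule ≤ L) : x.submodule ⊔ y.submodule = L := by
  induction x using Projectivization.ind with | h v hv =>
  induction y using Projectivization.ind with | h w hw =>
  rw [← independent_pair_iff_ne, independent_mk_iff_LinearIndependent] at hxy
  rw [submodule_mk, Submodule.span_singleton_le_iff_mem] at hx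
  rw [submodule_mk, Submodule.span_singleton_le_iff_mem] at hy
  rw [line_unique' hv hw hxy L hL ((L.mk_mem_projectivization_iff hv).2 hx)
    ((L.mk_mem_projectivization_iff hw).2 hy), submodule_mk, submodule_mk, Submodule.span_insert]

theorem exists_ne_add_mem_of_three_le_card :
    ∀ S : Finset (Fin 5), 3 ≤ S.card →
      ∃ d : Fin 5, d ≠ 0 ∧ ∃ a ∈ S, ∃ b ∈ S, a ≠ b ∧ a + d ∈ S ∧ b + d ∈ S := by
  decide

theorem submodule_frob (p : ℕ) [Fact p.Prime] (n : ℕ) (Q : ℙ (Kbar p) (Fin 3 → Kbar p)) :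
    (Frob p n Q).submodule = Q.submodule.map (frobSL p n) := by
  induction Q using Projectivization.ind with | h v hv =>
  rw [Frob]
  erw [Projectivization.map_mk]
  rw [submodule_mk, submodule_mk, Submodule.map_span, Set.image_singleton]

theorem statement3_general (p : ℕ) [Fact p.Prime] (n : ℕ)
    (P : Fin 5 → ℙ (Kbar p) (Fin 3 → Kbar p))
    (hcyc : ∀ i : Fin 5, P (i + 1) = Frob p n (P i))
    (hnf : Frob p n (P 0) ≠ P 0)
    (L : Submodule (Kbar p) (Fin 3 → Kbar p)) (hL : Module.finrank (Kbar p) L = 2)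
    (i j k : Fin 5) (hij : i ≠ j) (hik : i ≠ k) (hjk : j ≠ k)
    (hi : (P i).submodule ≤ L) (hj : (P j).submodule ≤ L) (hk : (P k).submodule ≤ L) :
    Submodule.map (frobSL p n) L = L ∧ ∀ m : Fin 5, (P m).submodule ≤ L := by
  classical
  set g : Submodule (Kbar p) (Fin 3 → Kbar p) → Submodule (Kbar p) (Fin 3 → Kbar p) :=
    Submodule.map (frobSL p n)
  have hR (c : Fin 5) : (P (c + 1)).submodule = g (P c).submodule := by
    rw [hcyc, submodule_frob]
  have hP_inj : Function.Injective P := injective_of_apply_add_one hcyc (by norm_num) hnf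
  obtain ⟨d, hd, a, ha, b, hb, hab, had, hbd⟩ := exists_ne_add_mem_of_three_le_card
    {c | (P c).submodule ≤ L} <|
      (Finset.card_eq_three.2 ⟨i, j, k, hij, hik, hjk, rfl⟩).ge.trans
        (Finset.card_le_card (by simp [Finset.insert_subset_iff, hi, hj, hk]))
  simp only [Finset.mem_filter_univ] at ha hb had hbd
  have hLab : (P a).submodule ⊔ (P b).submodule = L :=
    Projectivization.submodule_sup_eq_of_ne (hP_inj.ne hab) hL ha hb
  have hLd : (P (a + d)).submodule ⊔ (P (b + d)).submodule = L :=
    Projectivization.submodule_sup_eq_of_ne (hP_inj.ne (by simpa using hab)) hL had hbd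
  have hfix : Function.IsFixedPt g L := hLab ▸
    isFixedPt_sup_of_sup_add_eq (P := fun c => (P c).submodule)
      (fun A B => Submodule.map_sup A B _) hR (by norm_num) hd (hLd.trans hLab.symm)
  exact ⟨hfix, le_of_isFixedPt (P := fun c => (P c).submodule)
    (fun _ _ => Submodule.map_mono) hR hfix ha⟩

/-- If five points of `P^2(\bar F_q)` are permuted cyclically by the `q`-power
Frobenius `F` (so none is `F`-fixed) and three of them lie on a common line `L`, then
`L` is defined over `F_q` (i.e. `F(L) = L`) and contains all five points. -/
theorem statement3 (p : ℕ) [Fact p.Prime] (n : ℕ) (hn : 0 < n)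
    (P : Fin 5 → ℙ (Kbar p) (Fin 3 → Kbar p))
    (hcyc : ∀ i : Fin 5, P (i + 1) = Frob p n (P i))
    (hnf : Frob p n (P 0) ≠ P 0)
    (L : Submodule (Kbar p) (Fin 3 → Kbar p)) (hL : Module.finrank (Kbar p) L = 2)
    (i j k : Fin 5) (hij : i ≠ j) (hik : i ≠ k) (hjk : j ≠ k)
    (hi : (P i).submodule ≤ L) (hj : (P j).submodule ≤ L) (hk : (P k).submodule ≤ L) :
    Submodule.map (frobSL p n) L = L ∧ ∀ m : Fin 5, (P m).submodule ≤ L :=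
  statement3_general p n P hcyc hnf L hL i j k hij hik hjk hi hj hk
end

section
/- In the lattice Z^{1,6} with form diag(1,-1,...,-1), basis ℓ, e_1,...,e_6, and k = -3ℓ + e_1 + ... + e_6, the set of vectors e with e·e = -1 and e·k = -1 has exactly 27 elements: the 6 vectors e_i, the 15 vectors ℓ - e_i - e_j (i<j), and the 6 vectors 2ℓ - e_1 - ... - e_6 + e_i. -/
/-- The intersection form of the odd unimodular lattice `Z^{1,6}` in the basis
`ℓ, e_1, …, e_6`, i.e. `diag(1,-1,-1,-1,-1,-1,-1)`. -/
def bform (v w : Fin 7 → ℤ) : ℤ := v 0 * w 0 - ∑ i : Fin 6, v i.succ * w i.succ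

/-- The canonical class `k = -3ℓ + e_1 + ⋯ + e_6`. -/
def kvec : Fin 7 → ℤ := ![-3, 1, 1, 1, 1, 1, 1]

/-- The class `ℓ`. -/
def lvec : Fin 7 → ℤ := ![1, 0, 0, 0, 0, 0, 0]

/-- The class `e_i`, `1 ≤ i ≤ 6`. -/
def evec (i : Fin 6) : Fin 7 → ℤ := fun j => if j = i.succ then 1 else 0

private lemma fs2 : (Fin.succ 2 : Fin 7) = 3 := rfl
private lemma fs3 : (Fin.succ 3 : Fin 7) = 4 := rfl
private lemma fs4 : (Fin.succ 4 : Fin 7) = 5 := rfl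
private lemma fs5 : (Fin.succ 5 : Fin 7) = 6 := rfl
private lemma tt5 : (![(1:ℤ),1,1,1,1,1]) 5 = 1 := rfl

private lemma bform_eq (f g : Fin 7 → ℤ) : bform f g = f 0*g 0 - (f 1*g 1 + f 2*g 2 + f 3*g 3 + f 4*g 4 + f 5*g 5 + f 6*g 6) := by
  simp [bform, Fin.sum_univ_six, fs2, fs3, fs4, fs5]

private lemma bform_k (e : Fin 7 → ℤ) : bform e kvec = -3 * e 0 - (e 1 + e 2 + e 3 + e 4 + e 5 + e 6) := by
  simp [bform, kvec, Fin.sum_univ_six, fs2, fs3, fs4, fs5, tt5]; ring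

private lemma sq5 (x : ℤ) (h : x*x ≤ 5) : (x = -2 ∧ x*x = 4) ∨ (x = -1 ∧ x*x = 1) ∨ (x = 0 ∧ x*x = 0) ∨ (x = 1 ∧ x*x = 1) ∨ (x = 2 ∧ x*x = 4) := by
  have h1 : -2 ≤ x := by nlinarith
  have h2 : x ≤ 2 := by nlinarith
  interval_cases x <;> simp

private lemma sqa (a : ℤ) (h : 3*(a*a) - 6*a - 5 ≤ 0) : (a = 0 ∧ a*a = 0) ∨ (a = 1 ∧ a*a = 1) ∨ (a = 2 ∧ a*a = 4) := by
  have h1 : 0 ≤ a := by nlinarith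
  have h2 : a ≤ 2 := by nlinarith
  interval_cases a <;> simp

private lemma rsmall (b B : ℤ) (d : (b = -2 ∧ B = 4) ∨ (b = -1 ∧ B = 1) ∨ (b = 0 ∧ B = 0) ∨ (b = 1 ∧ B = 1) ∨ (b = 2 ∧ B = 4)) (q : B = -b) : b = -1 ∨ b = 0 := by omega

set_option maxHeartbeats 1000000 in
private lemma key (a b1 b2 b3 b4 b5 b6 : ℤ)
    (h1 : a*a - (b1*b1 + b2*b2 + b3*b3 + b4*b4 + b5*b5 + b6*b6) = -1)
    (h2 : -3*a - (b1 + b2 + b3 + b4 + b5 + b6) = -1) :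
    (a = 0 ∧ b1 = 1 ∧ b2 = 0 ∧ b3 = 0 ∧ b4 = 0 ∧ b5 = 0 ∧ b6 = 0) ∨
    (a = 0 ∧ b1 = 0 ∧ b2 = 1 ∧ b3 = 0 ∧ b4 = 0 ∧ b5 = 0 ∧ b6 = 0) ∨
    (a = 0 ∧ b1 = 0 ∧ b2 = 0 ∧ b3 = 1 ∧ b4 = 0 ∧ b5 = 0 ∧ b6 = 0) ∨
    (a = 0 ∧ b1 = 0 ∧ b2 = 0 ∧ b3 = 0 ∧ b4 = 1 ∧ b5 = 0 ∧ b6 = 0) ∨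
    (a = 0 ∧ b1 = 0 ∧ b2 = 0 ∧ b3 = 0 ∧ b4 = 0 ∧ b5 = 1 ∧ b6 = 0) ∨
    (a = 0 ∧ b1 = 0 ∧ b2 = 0 ∧ b3 = 0 ∧ b4 = 0 ∧ b5 = 0 ∧ b6 = 1) ∨
    (a = 1 ∧ b1 = -1 ∧ b2 = -1 ∧ b3 = 0 ∧ b4 = 0 ∧ b5 = 0 ∧ b6 = 0) ∨
    (a = 1 ∧ b1 = -1 ∧ b2 = 0 ∧ b3 = -1 ∧ b4 = 0 ∧ b5 = 0 ∧ b6 = 0) ∨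
    (a = 1 ∧ b1 = -1 ∧ b2 = 0 ∧ b3 = 0 ∧ b4 = -1 ∧ b5 = 0 ∧ b6 = 0) ∨
    (a = 1 ∧ b1 = -1 ∧ b2 = 0 ∧ b3 = 0 ∧ b4 = 0 ∧ b5 = -1 ∧ b6 = 0) ∨
    (a = 1 ∧ b1 = -1 ∧ b2 = 0 ∧ b3 = 0 ∧ b4 = 0 ∧ b5 = 0 ∧ b6 = -1) ∨
    (a = 1 ∧ b1 = 0 ∧ b2 = -1 ∧ b3 = -1 ∧ b4 = 0 ∧ b5 = 0 ∧ b6 = 0) ∨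
    (a = 1 ∧ b1 = 0 ∧ b2 = -1 ∧ b3 = 0 ∧ b4 = -1 ∧ b5 = 0 ∧ b6 = 0) ∨
    (a = 1 ∧ b1 = 0 ∧ b2 = -1 ∧ b3 = 0 ∧ b4 = 0 ∧ b5 = -1 ∧ b6 = 0) ∨
    (a = 1 ∧ b1 = 0 ∧ b2 = -1 ∧ b3 = 0 ∧ b4 = 0 ∧ b5 = 0 ∧ b6 = -1) ∨
    (a = 1 ∧ b1 = 0 ∧ b2 = 0 ∧ b3 = -1 ∧ b4 = -1 ∧ b5 = 0 ∧ b6 = 0) ∨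
    (a = 1 ∧ b1 = 0 ∧ b2 = 0 ∧ b3 = -1 ∧ b4 = 0 ∧ b5 = -1 ∧ b6 = 0) ∨
    (a = 1 ∧ b1 = 0 ∧ b2 = 0 ∧ b3 = -1 ∧ b4 = 0 ∧ b5 = 0 ∧ b6 = -1) ∨
    (a = 1 ∧ b1 = 0 ∧ b2 = 0 ∧ b3 = 0 ∧ b4 = -1 ∧ b5 = -1 ∧ b6 = 0) ∨
    (a = 1 ∧ b1 = 0 ∧ b2 = 0 ∧ b3 = 0 ∧ b4 = -1 ∧ b5 = 0 ∧ b6 = -1) ∨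
    (a = 1 ∧ b1 = 0 ∧ b2 = 0 ∧ b3 = 0 ∧ b4 = 0 ∧ b5 = -1 ∧ b6 = -1) ∨
    (a = 2 ∧ b1 = 0 ∧ b2 = -1 ∧ b3 = -1 ∧ b4 = -1 ∧ b5 = -1 ∧ b6 = -1) ∨
    (a = 2 ∧ b1 = -1 ∧ b2 = 0 ∧ b3 = -1 ∧ b4 = -1 ∧ b5 = -1 ∧ b6 = -1) ∨
    (a = 2 ∧ b1 = -1 ∧ b2 = -1 ∧ b3 = 0 ∧ b4 = -1 ∧ b5 = -1 ∧ b6 = -1) ∨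
    (a = 2 ∧ b1 = -1 ∧ b2 = -1 ∧ b3 = -1 ∧ b4 = 0 ∧ b5 = -1 ∧ b6 = -1) ∨
    (a = 2 ∧ b1 = -1 ∧ b2 = -1 ∧ b3 = -1 ∧ b4 = -1 ∧ b5 = 0 ∧ b6 = -1) ∨
    (a = 2 ∧ b1 = -1 ∧ b2 = -1 ∧ b3 = -1 ∧ b4 = -1 ∧ b5 = -1 ∧ b6 = 0) := by
  have hs : (b1+b2+b3+b4+b5+b6)*(b1+b2+b3+b4+b5+b6) ≤ 6*(b1*b1 + b2*b2 + b3*b3 + b4*b4 + b5*b5 + b6*b6) := by linarith [sq_nonneg (b1 - b2), sq_nonneg (b1 - b3), sq_nonneg (b1 - b4), sq_nonneg (b1 - b5), sq_nonneg (b1 - b6), sq_nonneg (b2 - b3), sq_nonneg (b2 - b4), sq_nonneg (b2 - b5), sq_nonneg (b2 - b6), sq_nonneg (b3 - b4), sq_nonneg (b3 - b5), sq_nonneg (b3 - b6), sq_nonneg (b4 - b5), sq_nonneg (b4 - b6), sq_nonneg (b5 - b6)]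
  have ha : 3*(a*a) - 6*a - 5 ≤ 0 := by nlinarith [hs, h1, h2]
  have da := sqa a ha
  have haa : a*a ≤ 4 := by rcases da with ⟨_,h⟩|⟨_,h⟩|⟨_,h⟩ <;> omega
  have d1 := sq5 b1 (by nlinarith [mul_self_nonneg b2, mul_self_nonneg b3, mul_self_nonneg b4, mul_self_nonneg b5, mul_self_nonneg b6])
  have d2 := sq5 b2 (by nlinarith [mul_self_nonneg b1, mul_self_nonneg b3, mul_self_nonneg b4, mul_self_nonneg b5, mul_self_nonneg b6])
  have d3 := sq5 b3 (by nlinarith [mul_self_nonneg b1, mul_self_nonneg b2, mul_self_nonneg b4, mul_self_nonneg b5, mul_self_nonneg b6])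
  have d4 := sq5 b4 (by nlinarith [mul_self_nonneg b1, mul_self_nonneg b2, mul_self_nonneg b3, mul_self_nonneg b5, mul_self_nonneg b6])
  have d5 := sq5 b5 (by nlinarith [mul_self_nonneg b1, mul_self_nonneg b2, mul_self_nonneg b3, mul_self_nonneg b4, mul_self_nonneg b6])
  have d6 := sq5 b6 (by nlinarith [mul_self_nonneg b1, mul_self_nonneg b2, mul_self_nonneg b3, mul_self_nonneg b4, mul_self_nonneg b5])
  have p1 : b1 ≤ b1*b1 ∧ -b1 ≤ b1*b1 := by constructor <;> nlinarith [mul_self_nonneg (b1-1), mul_self_nonneg (b1+1)]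
  have p2 : b2 ≤ b2*b2 ∧ -b2 ≤ b2*b2 := by constructor <;> nlinarith [mul_self_nonneg (b2-1), mul_self_nonneg (b2+1)]
  have p3 : b3 ≤ b3*b3 ∧ -b3 ≤ b3*b3 := by constructor <;> nlinarith [mul_self_nonneg (b3-1), mul_self_nonneg (b3+1)]
  have p4 : b4 ≤ b4*b4 ∧ -b4 ≤ b4*b4 := by constructor <;> nlinarith [mul_self_nonneg (b4-1), mul_self_nonneg (b4+1)]
  have p5 : b5 ≤ b5*b5 ∧ -b5 ≤ b5*b5 := by constructor <;> nlinarith [mul_self_nonneg (b5-1), mul_self_nonneg (b5+1)]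
  have p6 : b6 ≤ b6*b6 ∧ -b6 ≤ b6*b6 := by constructor <;> nlinarith [mul_self_nonneg (b6-1), mul_self_nonneg (b6+1)]
  clear hs ha haa
  generalize a*a = A at h1 da
  generalize b1*b1 = B1 at h1 d1 p1
  generalize b2*b2 = B2 at h1 d2 p2
  generalize b3*b3 = B3 at h1 d3 p3
  generalize b4*b4 = B4 at h1 d4 p4
  generalize b5*b5 = B5 at h1 d5 p5
  generalize b6*b6 = B6 at h1 d6 p6
  rcases da with ⟨rfl, rfl⟩|⟨rfl, rfl⟩|⟨rfl, rfl⟩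
  · have s1 : b1 = 0 ∨ b1 = 1 := by clear d1 d2 d3 d4 d5 d6; omega
    have s2 : b2 = 0 ∨ b2 = 1 := by clear d1 d2 d3 d4 d5 d6; omega
    have s3 : b3 = 0 ∨ b3 = 1 := by clear d1 d2 d3 d4 d5 d6; omega
    have s4 : b4 = 0 ∨ b4 = 1 := by clear d1 d2 d3 d4 d5 d6; omega
    have s5 : b5 = 0 ∨ b5 = 1 := by clear d1 d2 d3 d4 d5 d6; omega
    have s6 : b6 = 0 ∨ b6 = 1 := by clear d1 d2 d3 d4 d5 d6; omega
    clear d1 d2 d3 d4 d5 d6 p1 p2 p3 p4 p5 p6 h1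
    rcases s1 with rfl|rfl <;> rcases s2 with rfl|rfl <;> rcases s3 with rfl|rfl <;> rcases s4 with rfl|rfl <;> rcases s5 with rfl|rfl <;> rcases s6 with rfl|rfl <;> simp_all
  · have q1 : b1*1 ≤ 0 ∧ B1 = -b1 := by clear d1 d2 d3 d4 d5 d6; omega
    have q2 : b2*1 ≤ 0 ∧ B2 = -b2 := by clear d1 d2 d3 d4 d5 d6; omega
    have q3 : b3*1 ≤ 0 ∧ B3 = -b3 := by clear d1 d2 d3 d4 d5 d6; omega
    have q4 : b4*1 ≤ 0 ∧ B4 = -b4 := by clear d1 d2 d3 d4 d5 d6; omega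
    have q5 : b5*1 ≤ 0 ∧ B5 = -b5 := by clear d1 d2 d3 d4 d5 d6; omega
    have q6 : b6*1 ≤ 0 ∧ B6 = -b6 := by clear d1 d2 d3 d4 d5 d6; omega
    have s1 := rsmall b1 B1 d1 q1.2
    have s2 := rsmall b2 B2 d2 q2.2
    have s3 := rsmall b3 B3 d3 q3.2
    have s4 := rsmall b4 B4 d4 q4.2
    have s5 := rsmall b5 B5 d5 q5.2
    have s6 := rsmall b6 B6 d6 q6.2
    clear d1 d2 d3 d4 d5 d6 p1 p2 p3 p4 p5 p6 q1 q2 q3 q4 q5 q6 h1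
    rcases s1 with rfl|rfl <;> rcases s2 with rfl|rfl <;> rcases s3 with rfl|rfl <;> rcases s4 with rfl|rfl <;> rcases s5 with rfl|rfl <;> rcases s6 with rfl|rfl <;> simp_all
  · have q1 : b1*1 ≤ 0 ∧ B1 = -b1 := by clear d1 d2 d3 d4 d5 d6; omega
    have q2 : b2*1 ≤ 0 ∧ B2 = -b2 := by clear d1 d2 d3 d4 d5 d6; omega
    have q3 : b3*1 ≤ 0 ∧ B3 = -b3 := by clear d1 d2 d3 d4 d5 d6; omega
    have q4 : b4*1 ≤ 0 ∧ B4 = -b4 := by clear d1 d2 d3 d4 d5 d6; omega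
    have q5 : b5*1 ≤ 0 ∧ B5 = -b5 := by clear d1 d2 d3 d4 d5 d6; omega
    have q6 : b6*1 ≤ 0 ∧ B6 = -b6 := by clear d1 d2 d3 d4 d5 d6; omega
    have s1 := rsmall b1 B1 d1 q1.2
    have s2 := rsmall b2 B2 d2 q2.2
    have s3 := rsmall b3 B3 d3 q3.2
    have s4 := rsmall b4 B4 d4 q4.2
    have s5 := rsmall b5 B5 d5 q5.2
    have s6 := rsmall b6 B6 d6 q6.2
    clear d1 d2 d3 d4 d5 d6 p1 p2 p3 p4 p5 p6 q1 q2 q3 q4 q5 q6 h1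
    rcases s1 with rfl|rfl <;> rcases s2 with rfl|rfl <;> rcases s3 with rfl|rfl <;> rcases s4 with rfl|rfl <;> rcases s5 with rfl|rfl <;> rcases s6 with rfl|rfl <;> simp_all

private def T : Finset (Fin 7 → ℤ) := {![0,1,0,0,0,0,0], ![0,0,1,0,0,0,0], ![0,0,0,1,0,0,0], ![0,0,0,0,1,0,0], ![0,0,0,0,0,1,0], ![0,0,0,0,0,0,1], ![1,-1,-1,0,0,0,0], ![1,-1,0,-1,0,0,0], ![1,-1,0,0,-1,0,0], ![1,-1,0,0,0,-1,0], ![1,-1,0,0,0,0,-1], ![1,0,-1,-1,0,0,0], ![1,0,-1,0,-1,0,0], ![1,0,-1,0,0,-1,0], ![1,0,-1,0,0,0,-1], ![1,0,0,-1,-1,0,0], ![1,0,0,-1,0,-1,0], ![1,0,0,-1,0,0,-1], ![1,0,0,0,-1,-1,0], ![1,0,0,0,-1,0,-1], ![1,0,0,0,0,-1,-1], ![2,0,-1,-1,-1,-1,-1], ![2,-1,0,-1,-1,-1,-1], ![2,-1,-1,0,-1,-1,-1], ![2,-1,-1,-1,0,-1,-1], ![2,-1,-1,-1,-1,0,-1],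 ![2,-1,-1,-1,-1,-1,0]}

private lemma mainIff (e : Fin 7 → ℤ) : (bform e e = -1 ∧ bform e kvec = -1) ↔
    ((∃ i : Fin 6, e = evec i) ∨
     (∃ i j : Fin 6, i < j ∧ e = lvec - evec i - evec j) ∨
     (∃ i : Fin 6, e = 2 • lvec - (∑ j : Fin 6, evec j) + evec i)) := by
  constructor
  · rintro ⟨h1, h2⟩
    rw [bform_eq] at h1
    rw [bform_k] at h2
    have h1' : e 0 * e 0 - (e 1 * e 1 + e 2 * e 2 + e 3 * e 3 + e 4 * e 4 + e 5 * e 5 + e 6 * e 6) = -1 := by linarith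
    have h2' : -3 * e 0 - (e 1 + e 2 + e 3 + e 4 + e 5 + e 6) = -1 := by linarith
    rcases key (e 0) (e 1) (e 2) (e 3) (e 4) (e 5) (e 6) h1' h2' with h|h|h|h|h|h|h|h|h|h|h|h|h|h|h|h|h|h|h|h|h|h|h|h|h|h|h
    · obtain ⟨h0,hb1,hb2,hb3,hb4,hb5,hb6⟩ := h
      have he : e = (![0,1,0,0,0,0,0] : Fin 7 → ℤ) := by funext j; fin_cases j <;> simpa using ‹_›
      exact Or.inl ⟨0, he.trans (by decide : (![0,1,0,0,0,0,0] : Fin 7 → ℤ) = evec 0)⟩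
    · obtain ⟨h0,hb1,hb2,hb3,hb4,hb5,hb6⟩ := h
      have he : e = (![0,0,1,0,0,0,0] : Fin 7 → ℤ) := by funext j; fin_cases j <;> simpa using ‹_›
      exact Or.inl ⟨1, he.trans (by decide : (![0,0,1,0,0,0,0] : Fin 7 → ℤ) = evec 1)⟩
    · obtain ⟨h0,hb1,hb2,hb3,hb4,hb5,hb6⟩ := h
      have he : e = (![0,0,0,1,0,0,0] : Fin 7 → ℤ) := by funext j; fin_cases j <;> simpa using ‹_›
      exact Or.inl ⟨2, he.trans (by decide : (![0,0,0,1,0,0,0] : Fin 7 → ℤ) = evec 2)⟩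
    · obtain ⟨h0,hb1,hb2,hb3,hb4,hb5,hb6⟩ := h
      have he : e = (![0,0,0,0,1,0,0] : Fin 7 → ℤ) := by funext j; fin_cases j <;> simpa using ‹_›
      exact Or.inl ⟨3, he.trans (by decide : (![0,0,0,0,1,0,0] : Fin 7 → ℤ) = evec 3)⟩
    · obtain ⟨h0,hb1,hb2,hb3,hb4,hb5,hb6⟩ := h
      have he : e = (![0,0,0,0,0,1,0] : Fin 7 → ℤ) := by funext j; fin_cases j <;> simpa using ‹_›
      exact Or.inl ⟨4, he.trans (by decide : (![0,0,0,0,0,1,0] : Fin 7 → ℤ) = evec 4)⟩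
    · obtain ⟨h0,hb1,hb2,hb3,hb4,hb5,hb6⟩ := h
      have he : e = (![0,0,0,0,0,0,1] : Fin 7 → ℤ) := by funext j; fin_cases j <;> simpa using ‹_›
      exact Or.inl ⟨5, he.trans (by decide : (![0,0,0,0,0,0,1] : Fin 7 → ℤ) = evec 5)⟩
    · obtain ⟨h0,hb1,hb2,hb3,hb4,hb5,hb6⟩ := h
      have he : e = (![1,-1,-1,0,0,0,0] : Fin 7 → ℤ) := by funext j; fin_cases j <;> simpa using ‹_›
      exact Or.inr (Or.inl ⟨0, 1, by decide, he.trans (by decide : (![1,-1,-1,0,0,0,0] : Fin 7 → ℤ) = lvec - evec 0 - evec 1)⟩)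
    · obtain ⟨h0,hb1,hb2,hb3,hb4,hb5,hb6⟩ := h
      have he : e = (![1,-1,0,-1,0,0,0] : Fin 7 → ℤ) := by funext j; fin_cases j <;> simpa using ‹_›
      exact Or.inr (Or.inl ⟨0, 2, by decide, he.trans (by decide : (![1,-1,0,-1,0,0,0] : Fin 7 → ℤ) = lvec - evec 0 - evec 2)⟩)
    · obtain ⟨h0,hb1,hb2,hb3,hb4,hb5,hb6⟩ := h
      have he : e = (![1,-1,0,0,-1,0,0] : Fin 7 → ℤ) := by funext j; fin_cases j <;> simpa using ‹_›
      exact Or.inr (Or.inl ⟨0, 3, by decide, he.trans (by decide : (![1,-1,0,0,-1,0,0] : Fin 7 → ℤ) = lvec - evec 0 - evec 3)⟩)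
    · obtain ⟨h0,hb1,hb2,hb3,hb4,hb5,hb6⟩ := h
      have he : e = (![1,-1,0,0,0,-1,0] : Fin 7 → ℤ) := by funext j; fin_cases j <;> simpa using ‹_›
      exact Or.inr (Or.inl ⟨0, 4, by decide, he.trans (by decide : (![1,-1,0,0,0,-1,0] : Fin 7 → ℤ) = lvec - evec 0 - evec 4)⟩)
    · obtain ⟨h0,hb1,hb2,hb3,hb4,hb5,hb6⟩ := h
      have he : e = (![1,-1,0,0,0,0,-1] : Fin 7 → ℤ) := by funext j; fin_cases j <;> simpa using ‹_›
      exact Or.inr (Or.inl ⟨0, 5, by decide, he.trans (by decide : (![1,-1,0,0,0,0,-1] : Fin 7 → ℤ) = lvec - evec 0 - evec 5)⟩)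
    · obtain ⟨h0,hb1,hb2,hb3,hb4,hb5,hb6⟩ := h
      have he : e = (![1,0,-1,-1,0,0,0] : Fin 7 → ℤ) := by funext j; fin_cases j <;> simpa using ‹_›
      exact Or.inr (Or.inl ⟨1, 2, by decide, he.trans (by decide : (![1,0,-1,-1,0,0,0] : Fin 7 → ℤ) = lvec - evec 1 - evec 2)⟩)
    · obtain ⟨h0,hb1,hb2,hb3,hb4,hb5,hb6⟩ := h
      have he : e = (![1,0,-1,0,-1,0,0] : Fin 7 → ℤ) := by funext j; fin_cases j <;> simpa using ‹_›
      exact Or.inr (Or.inl ⟨1, 3, by decide, he.trans (by decide : (![1,0,-1,0,-1,0,0] : Fin 7 → ℤ) = lvec - evec 1 - evec 3)⟩)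
    · obtain ⟨h0,hb1,hb2,hb3,hb4,hb5,hb6⟩ := h
      have he : e = (![1,0,-1,0,0,-1,0] : Fin 7 → ℤ) := by funext j; fin_cases j <;> simpa using ‹_›
      exact Or.inr (Or.inl ⟨1, 4, by decide, he.trans (by decide : (![1,0,-1,0,0,-1,0] : Fin 7 → ℤ) = lvec - evec 1 - evec 4)⟩)
    · obtain ⟨h0,hb1,hb2,hb3,hb4,hb5,hb6⟩ := h
      have he : e = (![1,0,-1,0,0,0,-1] : Fin 7 → ℤ) := by funext j; fin_cases j <;> simpa using ‹_›
      exact Or.inr (Or.inl ⟨1, 5, by decide, he.trans (by decide : (![1,0,-1,0,0,0,-1] : Fin 7 → ℤ) = lvec - evec 1 - evec 5)⟩)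
    · obtain ⟨h0,hb1,hb2,hb3,hb4,hb5,hb6⟩ := h
      have he : e = (![1,0,0,-1,-1,0,0] : Fin 7 → ℤ) := by funext j; fin_cases j <;> simpa using ‹_›
      exact Or.inr (Or.inl ⟨2, 3, by decide, he.trans (by decide : (![1,0,0,-1,-1,0,0] : Fin 7 → ℤ) = lvec - evec 2 - evec 3)⟩)
    · obtain ⟨h0,hb1,hb2,hb3,hb4,hb5,hb6⟩ := h
      have he : e = (![1,0,0,-1,0,-1,0] : Fin 7 → ℤ) := by funext j; fin_cases j <;> simpa using ‹_›
      exact Or.inr (Or.inl ⟨2, 4, by decide, he.trans (by decide : (![1,0,0,-1,0,-1,0] : Fin 7 → ℤ) = lvec - evec 2 - evec 4)⟩)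
    · obtain ⟨h0,hb1,hb2,hb3,hb4,hb5,hb6⟩ := h
      have he : e = (![1,0,0,-1,0,0,-1] : Fin 7 → ℤ) := by funext j; fin_cases j <;> simpa using ‹_›
      exact Or.inr (Or.inl ⟨2, 5, by decide, he.trans (by decide : (![1,0,0,-1,0,0,-1] : Fin 7 → ℤ) = lvec - evec 2 - evec 5)⟩)
    · obtain ⟨h0,hb1,hb2,hb3,hb4,hb5,hb6⟩ := h
      have he : e = (![1,0,0,0,-1,-1,0] : Fin 7 → ℤ) := by funext j; fin_cases j <;> simpa using ‹_›
      exact Or.inr (Or.inl ⟨3, 4, by decide, he.trans (by decide : (![1,0,0,0,-1,-1,0] : Fin 7 → ℤ) = lvec - evec 3 - evec 4)⟩)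
    · obtain ⟨h0,hb1,hb2,hb3,hb4,hb5,hb6⟩ := h
      have he : e = (![1,0,0,0,-1,0,-1] : Fin 7 → ℤ) := by funext j; fin_cases j <;> simpa using ‹_›
      exact Or.inr (Or.inl ⟨3, 5, by decide, he.trans (by decide : (![1,0,0,0,-1,0,-1] : Fin 7 → ℤ) = lvec - evec 3 - evec 5)⟩)
    · obtain ⟨h0,hb1,hb2,hb3,hb4,hb5,hb6⟩ := h
      have he : e = (![1,0,0,0,0,-1,-1] : Fin 7 → ℤ) := by funext j; fin_cases j <;> simpa using ‹_›
      exact Or.inr (Or.inl ⟨4, 5, by decide, he.trans (by decide : (![1,0,0,0,0,-1,-1] : Fin 7 → ℤ) = lvec - evec 4 - evec 5)⟩)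
    · obtain ⟨h0,hb1,hb2,hb3,hb4,hb5,hb6⟩ := h
      have he : e = (![2,0,-1,-1,-1,-1,-1] : Fin 7 → ℤ) := by funext j; fin_cases j <;> simpa using ‹_›
      exact Or.inr (Or.inr ⟨0, he.trans (by decide : (![2,0,-1,-1,-1,-1,-1] : Fin 7 → ℤ) = 2 • lvec - (∑ j : Fin 6, evec j) + evec 0)⟩)
    · obtain ⟨h0,hb1,hb2,hb3,hb4,hb5,hb6⟩ := h
      have he : e = (![2,-1,0,-1,-1,-1,-1] : Fin 7 → ℤ) := by funext j; fin_cases j <;> simpa using ‹_›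
      exact Or.inr (Or.inr ⟨1, he.trans (by decide : (![2,-1,0,-1,-1,-1,-1] : Fin 7 → ℤ) = 2 • lvec - (∑ j : Fin 6, evec j) + evec 1)⟩)
    · obtain ⟨h0,hb1,hb2,hb3,hb4,hb5,hb6⟩ := h
      have he : e = (![2,-1,-1,0,-1,-1,-1] : Fin 7 → ℤ) := by funext j; fin_cases j <;> simpa using ‹_›
      exact Or.inr (Or.inr ⟨2, he.trans (by decide : (![2,-1,-1,0,-1,-1,-1] : Fin 7 → ℤ) = 2 • lvec - (∑ j : Fin 6, evec j) + evec 2)⟩)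
    · obtain ⟨h0,hb1,hb2,hb3,hb4,hb5,hb6⟩ := h
      have he : e = (![2,-1,-1,-1,0,-1,-1] : Fin 7 → ℤ) := by funext j; fin_cases j <;> simpa using ‹_›
      exact Or.inr (Or.inr ⟨3, he.trans (by decide : (![2,-1,-1,-1,0,-1,-1] : Fin 7 → ℤ) = 2 • lvec - (∑ j : Fin 6, evec j) + evec 3)⟩)
    · obtain ⟨h0,hb1,hb2,hb3,hb4,hb5,hb6⟩ := h
      have he : e = (![2,-1,-1,-1,-1,0,-1] : Fin 7 → ℤ) := by funext j; fin_cases j <;> simpa using ‹_›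
      exact Or.inr (Or.inr ⟨4, he.trans (by decide : (![2,-1,-1,-1,-1,0,-1] : Fin 7 → ℤ) = 2 • lvec - (∑ j : Fin 6, evec j) + evec 4)⟩)
    · obtain ⟨h0,hb1,hb2,hb3,hb4,hb5,hb6⟩ := h
      have he : e = (![2,-1,-1,-1,-1,-1,0] : Fin 7 → ℤ) := by funext j; fin_cases j <;> simpa using ‹_›
      exact Or.inr (Or.inr ⟨5, he.trans (by decide : (![2,-1,-1,-1,-1,-1,0] : Fin 7 → ℤ) = 2 • lvec - (∑ j : Fin 6, evec j) + evec 5)⟩)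
  · rintro (⟨i, rfl⟩ | ⟨i, j, hij, rfl⟩ | ⟨i, rfl⟩)
    · fin_cases i <;> exact ⟨by decide, by decide⟩
    · fin_cases i <;> fin_cases j <;> first
        | exact absurd hij (by decide)
        | exact ⟨by decide, by decide⟩
    · fin_cases i <;> exact ⟨by decide, by decide⟩

private lemma memT (e : Fin 7 → ℤ) :
    ((∃ i : Fin 6, e = evec i) ∨
     (∃ i j : Fin 6, i < j ∧ e = lvec - evec i - evec j) ∨
     (∃ i : Fin 6, e = 2 • lvec - (∑ j : Fin 6, evec j) + evec i)) ↔ e ∈ T := by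
  constructor
  · rintro (⟨i, rfl⟩ | ⟨i, j, hij, rfl⟩ | ⟨i, rfl⟩)
    · fin_cases i <;> decide
    · fin_cases i <;> fin_cases j <;> first
        | exact absurd hij (by decide)
        | decide
    · fin_cases i <;> decide
  · intro h
    simp only [T, Finset.mem_insert, Finset.mem_singleton] at h
    rcases h with rfl|rfl|rfl|rfl|rfl|rfl|rfl|rfl|rfl|rfl|rfl|rfl|rfl|rfl|rfl|rfl|rfl|rfl|rfl|rfl|rfl|rfl|rfl|rfl|rfl|rfl|rfl
    · exact Or.inl ⟨0, (by decide : (![0,1,0,0,0,0,0] : Fin 7 → ℤ) = evec 0)⟩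
    · exact Or.inl ⟨1, (by decide : (![0,0,1,0,0,0,0] : Fin 7 → ℤ) = evec 1)⟩
    · exact Or.inl ⟨2, (by decide : (![0,0,0,1,0,0,0] : Fin 7 → ℤ) = evec 2)⟩
    · exact Or.inl ⟨3, (by decide : (![0,0,0,0,1,0,0] : Fin 7 → ℤ) = evec 3)⟩
    · exact Or.inl ⟨4, (by decide : (![0,0,0,0,0,1,0] : Fin 7 → ℤ) = evec 4)⟩
    · exact Or.inl ⟨5, (by decide : (![0,0,0,0,0,0,1] : Fin 7 → ℤ) = evec 5)⟩
    · exact Or.inr (Or.inl ⟨0, 1, by decide, (by decide : (![1,-1,-1,0,0,0,0] : Fin 7 → ℤ) = lvec - evec 0 - evec 1)⟩)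
    · exact Or.inr (Or.inl ⟨0, 2, by decide, (by decide : (![1,-1,0,-1,0,0,0] : Fin 7 → ℤ) = lvec - evec 0 - evec 2)⟩)
    · exact Or.inr (Or.inl ⟨0, 3, by decide, (by decide : (![1,-1,0,0,-1,0,0] : Fin 7 → ℤ) = lvec - evec 0 - evec 3)⟩)
    · exact Or.inr (Or.inl ⟨0, 4, by decide, (by decide : (![1,-1,0,0,0,-1,0] : Fin 7 → ℤ) = lvec - evec 0 - evec 4)⟩)
    · exact Or.inr (Or.inl ⟨0, 5, by decide, (by decide : (![1,-1,0,0,0,0,-1] : Fin 7 → ℤ) = lvec - evec 0 - evec 5)⟩)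
    · exact Or.inr (Or.inl ⟨1, 2, by decide, (by decide : (![1,0,-1,-1,0,0,0] : Fin 7 → ℤ) = lvec - evec 1 - evec 2)⟩)
    · exact Or.inr (Or.inl ⟨1, 3, by decide, (by decide : (![1,0,-1,0,-1,0,0] : Fin 7 → ℤ) = lvec - evec 1 - evec 3)⟩)
    · exact Or.inr (Or.inl ⟨1, 4, by decide, (by decide : (![1,0,-1,0,0,-1,0] : Fin 7 → ℤ) = lvec - evec 1 - evec 4)⟩)
    · exact Or.inr (Or.inl ⟨1, 5, by decide, (by decide : (![1,0,-1,0,0,0,-1] : Fin 7 → ℤ) = lvec - evec 1 - evec 5)⟩)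
    · exact Or.inr (Or.inl ⟨2, 3, by decide, (by decide : (![1,0,0,-1,-1,0,0] : Fin 7 → ℤ) = lvec - evec 2 - evec 3)⟩)
    · exact Or.inr (Or.inl ⟨2, 4, by decide, (by decide : (![1,0,0,-1,0,-1,0] : Fin 7 → ℤ) = lvec - evec 2 - evec 4)⟩)
    · exact Or.inr (Or.inl ⟨2, 5, by decide, (by decide : (![1,0,0,-1,0,0,-1] : Fin 7 → ℤ) = lvec - evec 2 - evec 5)⟩)
    · exact Or.inr (Or.inl ⟨3, 4, by decide, (by decide : (![1,0,0,0,-1,-1,0] : Fin 7 → ℤ) = lvec - evec 3 - evec 4)⟩)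
    · exact Or.inr (Or.inl ⟨3, 5, by decide, (by decide : (![1,0,0,0,-1,0,-1] : Fin 7 → ℤ) = lvec - evec 3 - evec 5)⟩)
    · exact Or.inr (Or.inl ⟨4, 5, by decide, (by decide : (![1,0,0,0,0,-1,-1] : Fin 7 → ℤ) = lvec - evec 4 - evec 5)⟩)
    · exact Or.inr (Or.inr ⟨0, (by decide : (![2,0,-1,-1,-1,-1,-1] : Fin 7 → ℤ) = 2 • lvec - (∑ j : Fin 6, evec j) + evec 0)⟩)
    · exact Or.inr (Or.inr ⟨1, (by decide : (![2,-1,0,-1,-1,-1,-1] : Fin 7 → ℤ) = 2 • lvec - (∑ j : Fin 6, evec j) + evec 1)⟩)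
    · exact Or.inr (Or.inr ⟨2, (by decide : (![2,-1,-1,0,-1,-1,-1] : Fin 7 → ℤ) = 2 • lvec - (∑ j : Fin 6, evec j) + evec 2)⟩)
    · exact Or.inr (Or.inr ⟨3, (by decide : (![2,-1,-1,-1,0,-1,-1] : Fin 7 → ℤ) = 2 • lvec - (∑ j : Fin 6, evec j) + evec 3)⟩)
    · exact Or.inr (Or.inr ⟨4, (by decide : (![2,-1,-1,-1,-1,0,-1] : Fin 7 → ℤ) = 2 • lvec - (∑ j : Fin 6, evec j) + evec 4)⟩)
    · exact Or.inr (Or.inr ⟨5, (by decide : (![2,-1,-1,-1,-1,-1,0] : Fin 7 → ℤ) = 2 • lvec - (∑ j : Fin 6, evec j) + evec 5)⟩)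

private lemma cardT : T.card = 27 := by decide

/-- In `Z^{1,6}` with `k = -3ℓ + e_1 + ⋯ + e_6` there are exactly 27 vectors `e` with
`e·e = -1` and `e·k = -1`: the 6 vectors `e_i`, the 15 vectors `ℓ - e_i - e_j` (`i<j`),
and the 6 vectors `2ℓ - e_1 - ⋯ - e_6 + e_i` (the 27 lines on a cubic surface). -/
theorem statement10 :
    Nat.card {e : Fin 7 → ℤ // bform e e = -1 ∧ bform e kvec = -1} = 27 ∧
    ∀ e : Fin 7 → ℤ, (bform e e = -1 ∧ bform e kvec = -1) ↔
      ((∃ i : Fin 6, e = evec i) ∨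
       (∃ i j : Fin 6, i < j ∧ e = lvec - evec i - evec j) ∨
       (∃ i : Fin 6, e = 2 • lvec - (∑ j : Fin 6, evec j) + evec i)) := by
  constructor
  · have h1 : Nat.card {e : Fin 7 → ℤ // bform e e = -1 ∧ bform e kvec = -1} = Nat.card {e : Fin 7 → ℤ // e ∈ T} :=
      Nat.card_congr (Equiv.subtypeEquivRight fun e => (mainIff e).trans (memT e))
    rw [h1, Nat.card_eq_finsetCard, cardT]
  · exact fun e => mainIff e
end
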